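/- arXiv:1011.2340 — 6 statements merged into one kernel-verified Lean document; each statement's English description precedes it below -/
import Mathlib

section
/- For every integer m > 51, there exists a prime p ≡ 2 (mod 3) such that 3p < m and p does not divide m. -/
/-!
If some prime `p ≡ 2 (mod 3)` with `3p < m` does not divide `m`, we are done, so suppose all of
them do; as `m > 51`, this includes `2`, `5` and `11`. Let `R` be the product of those that do not
divide `10`, so that `10 R ∣ m` and `R ≥ 11`. Then `3R - 10 ≡ 2 (mod 3)` has a prime
factor `q ≡ 2 (mod 3)`, and `3q < 9R < m`, so `q ∣ m`. But `q ∣ R ↔ q ∣ 10` because `q ∣ 3R - 10`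
and `q ≠ 3`, whereas by the definition of `R` we have `q ∣ R ↔ ¬ q ∣ 10`.
-/

namespace Nat

theorem modEq_one_of_forall_prime_dvd {k n : ℕ} (hn : n ≠ 0)
    (h : ∀ p, p.Prime → p ∣ n → p ≡ 1 [MOD k]) : n ≡ 1 [MOD k] := by
  induction n using Nat.recOnMul with
  | zero => exact absurd rfl hn
  | one => rfl
  | prime p hp => exact h p hp dvd_rfl
  | mul a b iha ihb =>
    obtain ⟨ha, hb⟩ := mul_ne_zero_iff.mp hn
    simpa using (iha ha fun p hp hpa => h p hp (hpa.mul_right b)).mul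
      (ihb hb fun p hp hpb => h p hp (hpb.mul_left a))

theorem exists_prime_dvd_mod_three_eq_two {n : ℕ} (hn : n % 3 = 2) :
    ∃ p, p.Prime ∧ p % 3 = 2 ∧ p ∣ n := by
  by_contra! h
  have hn1 : n ≡ 1 [MOD 3] := modEq_one_of_forall_prime_dvd (by omega) fun p hp hpn => by
    have hp3 : ¬ 3 ∣ p := fun h3 => by
      obtain rfl := (prime_dvd_prime_iff_eq prime_three hp).mp h3
      omega
    have hp2 : p % 3 ≠ 2 := fun hp2 => h p hp hp2 hpn
    unfold ModEq
    omega
  unfold ModEq at hn1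
  omega

theorem prod_dvd_of_subset_primeFactors {s : Finset ℕ} {n : ℕ} (hs : s ⊆ n.primeFactors) :
    ∏ p ∈ s, p ∣ n :=
  (Finset.prod_dvd_prod_of_subset _ _ id hs).trans n.prod_primeFactors_dvd

theorem Prime.mem_of_dvd_prod {q : ℕ} (hq : q.Prime) {s : Finset ℕ} (hs : ∀ p ∈ s, p.Prime)
    (hqs : q ∣ ∏ p ∈ s, p) : q ∈ s := by
  rw [← primeFactors_prod hs]
  exact Nat.mem_primeFactors.mpr ⟨hq, hqs, (Finset.prod_pos fun p hp => (hs p hp).pos).ne'⟩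

end Nat

theorem exists_prime_mod_three_eq_two_not_dvd_of_dvd {m : ℕ} (hm : m ≠ 0) (h2 : 2 ∣ m)
    (h5 : 5 ∣ m) (h11 : 11 ∣ m) : ∃ p : ℕ, p.Prime ∧ p % 3 = 2 ∧ 3 * p < m ∧ ¬ p ∣ m := by
  by_contra! h
  set S := {p ∈ m.primeFactors | p % 3 = 2 ∧ 3 * p < m ∧ ¬ p ∣ 10}
  set R := ∏ p ∈ S, p
  have hS_prime : ∀ p ∈ S, p.Prime := fun p hp =>
    Nat.prime_of_mem_primeFactors (Finset.mem_filter.mp hp).1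
  have hR_coprime : R.Coprime 10 := Nat.Coprime.prod_left fun p hp =>
    (Nat.Prime.coprime_iff_not_dvd (hS_prime p hp)).mpr (Finset.mem_filter.mp hp).2.2.2
  have h10R : 10 * R ≤ m := Nat.le_of_dvd (Nat.pos_of_ne_zero hm) <|
    hR_coprime.symm.mul_dvd_of_dvd_of_dvd
      (Nat.Coprime.mul_dvd_of_dvd_of_dvd (by norm_num) h2 h5)
      (Nat.prod_dvd_of_subset_primeFactors (Finset.filter_subset _ _))
  have h11R : 11 ≤ R := by
    have h11S : 11 ∈ S := Finset.mem_filter.mpr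
      ⟨Nat.mem_primeFactors.mpr ⟨by norm_num, h11, hm⟩, rfl, by omega, by norm_num⟩
    exact Nat.le_of_dvd (Finset.prod_pos fun p hp => (hS_prime p hp).pos)
      (Finset.dvd_prod_of_mem _ h11S)
  obtain ⟨q, hq, hq3, hqN⟩ := Nat.exists_prime_dvd_mod_three_eq_two (n := 3 * R - 10) (by omega)
  have hqm : 3 * q < m := by have := Nat.le_of_dvd (by omega) hqN; omega
  have hq_mem_iff_dvd_R : q ∈ S ↔ q ∣ R :=
    ⟨Finset.dvd_prod_of_mem _, hq.mem_of_dvd_prod hS_prime⟩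
  have hq_mem_iff : q ∈ S ↔ ¬ q ∣ 10 := by
    simp [S, hq, hm, hq3, hqm, h q hq hq3 hqm]
  have hq_dvd_R_iff : q ∣ R ↔ q ∣ 10 := by
    have hq_coprime : q.Coprime 3 := (Nat.coprime_primes hq Nat.prime_three).mpr (by omega)
    rw [← hq_coprime.dvd_mul_left]
    exact ⟨fun hq3R => (Nat.dvd_sub_iff_right (by omega) hq3R).mp hqN,
      fun hq10 => (Nat.dvd_sub_iff_left (by omega) hq10).mp hqN⟩
  exact iff_not_self (hq_dvd_R_iff.symm.trans (hq_mem_iff_dvd_R.symm.trans hq_mem_iff))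

theorem stmt_1 (m : ℕ) (hm : 51 < m) :
    ∃ p : ℕ, p.Prime ∧ p % 3 = 2 ∧ 3 * p < m ∧ ¬ p ∣ m := by
  by_cases h2 : 2 ∣ m
  case neg => exact ⟨2, Nat.prime_two, rfl, by omega, h2⟩
  by_cases h5 : 5 ∣ m
  case neg => exact ⟨5, by norm_num, rfl, by omega, h5⟩
  by_cases h11 : 11 ∣ m
  case neg => exact ⟨11, by norm_num, rfl, by omega, h11⟩
  exact exists_prime_mod_three_eq_two_not_dvd_of_dvd (by omega) h2 h5 h11
end

section
/- Let m > 3 be an integer with 3 ∣ m and m ∉ {6, 12, 30}. Then there exists an integer c with c ≡ 2 (mod 3), gcd(c, m) = 1, and the fractional part of c/m strictly less than 1/3. -/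
/-!
If `m` is odd, `c = 2` works. Otherwise the radical of `m` is `6 * q` with `q` prime to `6`.
Since `c` is coprime to `d * (c + d)` as soon as it is coprime to `d`, the number `c = 2q - 3`
(if `q ≡ 1 mod 3`, with `d = 3`) or `c = q - 6` (if `q ≡ 2 mod 3`, with `d = 6`) is `≡ 2 mod 3`,
coprime to `6q` and hence to `m`, and smaller than `2q ≤ m / 3`. For `q = 1` and `q = 5`, where
these candidates are negative, `c = 5` resp. `c = 11` works unless `m ∈ {6, 12, 30}`.
-/

open UniqueFactorizationMonoid

namespace Nat

theorem Coprime.of_coprime_radical {c m : ℕ} (hm : m ≠ 0) (h : Coprime c (radical m)) :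
    Coprime c m :=
  (h.pow_right m).coprime_dvd_right (dvd_radical_pow_self hm)

theorem exists_radical_eq_six_mul {m : ℕ} (hm : m ≠ 0) (h6 : 6 ∣ m) :
    ∃ q, radical m = 6 * q ∧ Coprime 6 q := by
  have hsq : Squarefree (2 * 3) :=
    squarefree_mul_iff.2 ⟨by norm_num, prime_two.squarefree, prime_three.squarefree⟩
  obtain ⟨q, hq⟩ := (dvd_radical_iff hsq.isRadical hm).2 h6
  exact ⟨q, hq, (squarefree_mul_iff.1 (hq ▸ squarefree_radical)).1⟩

theorem coprime_mul_self_add {c d : ℕ} (h : Coprime c d) : Coprime c (d * (c + d)) :=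
  h.mul_right (coprime_self_add_right.2 h)

theorem exists_mod_three_eq_two_coprime_six_mul_lt {q : ℕ} (hq : Coprime 6 q) (h1 : q ≠ 1)
    (h5 : q ≠ 5) : ∃ c, c % 3 = 2 ∧ Coprime c (6 * q) ∧ c < 2 * q := by
  have hq6 : q % 6 = 1 ∨ q % 6 = 5 := by
    have hr : Coprime (q % 6) 6 := (ZMod.coprime_mod_iff_coprime q 6).2 hq.symm
    have : q % 6 < 6 := mod_lt q (by norm_num)
    interval_cases h : q % 6 <;> first | omega | exact absurd hr (by decide)
  rcases hq6 with hq6 | hq6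
  · refine ⟨2 * q - 3, by omega, ?_, by omega⟩
    have hc : Coprime (2 * q - 3) 3 :=
      (ZMod.coprime_mod_iff_coprime _ 3).1 (by rw [show (2 * q - 3) % 3 = 2 by omega]; norm_num)
    simpa [show 3 * (2 * q - 3 + 3) = 6 * q by omega] using coprime_mul_self_add hc
  · refine ⟨q - 6, by omega, ?_, by omega⟩
    have hc : Coprime (q - 6) 6 :=
      (ZMod.coprime_mod_iff_coprime _ 6).1 (by rw [show (q - 6) % 6 = 5 by omega]; norm_num)
    simpa [show 6 * (q - 6 + 6) = 6 * q by omega] using coprime_mul_self_add hc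

theorem exists_mod_three_eq_two_coprime_lt {m : ℕ} (hm : 3 < m) (h3 : 3 ∣ m) (h6 : m ≠ 6)
    (h12 : m ≠ 12) (h30 : m ≠ 30) : ∃ c, c % 3 = 2 ∧ Coprime c m ∧ 3 * c < m := by
  have hm0 : m ≠ 0 := by omega
  by_cases h2 : 2 ∣ m
  swap
  · exact ⟨2, rfl, (Prime.coprime_iff_not_dvd prime_two).2 h2, by omega⟩
  obtain ⟨q, hrad, hq⟩ := exists_radical_eq_six_mul hm0 (by omega)
  have hqm : 6 * q ∣ m := hrad ▸ radical_dvd_self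
  suffices ∃ c, c % 3 = 2 ∧ Coprime c (6 * q) ∧ 3 * c < m by
    obtain ⟨c, hc3, hcq, hcm⟩ := this
    exact ⟨c, hc3, (hrad ▸ hcq).of_coprime_radical hm0, hcm⟩
  obtain rfl | hq1 := eq_or_ne q 1
  · exact ⟨5, rfl, by decide, by omega⟩
  obtain rfl | hq5 := eq_or_ne q 5
  · exact ⟨11, rfl, by decide, by omega⟩
  obtain ⟨c, hc3, hcq, hc⟩ := exists_mod_three_eq_two_coprime_six_mul_lt hq hq1 hq5
  exact ⟨c, hc3, hcq, by have := le_of_dvd (by omega) hqm; omega⟩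

end Nat

theorem stmt_2 (m : ℤ) (hm : 3 < m) (h3 : 3 ∣ m) (h6 : m ≠ 6) (h12 : m ≠ 12) (h30 : m ≠ 30) :
    ∃ c : ℤ, c % 3 = 2 ∧ Int.gcd c m = 1 ∧ Int.fract ((c : ℚ) / (m : ℚ)) < 1 / 3 := by
  lift m to ℕ using (by omega)
  obtain ⟨c, hc3, hcm, hlt⟩ :=
    Nat.exists_mod_three_eq_two_coprime_lt (m := m) (by omega) (by exact_mod_cast h3) (by omega)
      (by omega) (by omega)
  refine ⟨c, by omega, by rwa [Int.gcd_natCast_natCast], ?_⟩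
  push_cast
  rw [Int.fract_div_natCast_eq_div_natCast_mod, Nat.mod_eq_of_lt (by omega),
    div_lt_iff₀ (by exact_mod_cast (show 0 < m by omega))]
  have : (3 * c : ℚ) < m := by exact_mod_cast hlt
  linarith
end

section
/- Let m > 6 be an integer with m ∉ {9, 12, 18, 24, 30, 60}. Then there exists an integer j' with j' ≡ 2 (mod 3), gcd(j', m) = 1, and fractional part of j'/m strictly less than 1/6. -/
/-!
It suffices to find a natural number `j ≡ 2 (mod 3)`, prime to `m`, whose residue mod `m` is
below `m / 6`. If `3 ∤ m` then `j = 1 + m ^ 2` works, and if `m` is odd then `j = 2` does. If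
`6 ∣ m`, write `m = 2 ^ a * 3 ^ b * m'` with `m'` prime to `6`: when `m' ≥ 7`, one of `m' - 2`,
`m' - 6` is `≡ 5 (mod 6)`, prime to `m`, and below `m' ≤ m / 6`; when `m' ∈ {1, 5}` the residues
`5` resp. `11` work unless `m` is one of the excluded values.
-/

namespace Nat

lemma coprime_six_of_mod_six_eq_five {r : ℕ} (h : r % 6 = 5) : r.Coprime 6 := by
  rw [Nat.Coprime, Nat.gcd_comm, Nat.gcd_rec, h]
  rfl

lemma Coprime.mul_two_pow_mul_three_pow {r m : ℕ} (h6 : r.Coprime 6) (h : r.Coprime m)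
    (a b : ℕ) : r.Coprime (2 ^ a * (3 ^ b * m)) :=
  ((h6.coprime_dvd_right (by norm_num)).pow_right a).mul_right
    (((h6.coprime_dvd_right (by norm_num)).pow_right b).mul_right h)

lemma exists_lt_mod_six_eq_five_coprime {m : ℕ} (h2 : ¬ 2 ∣ m) (h3 : ¬ 3 ∣ m) (hm : 7 ≤ m) :
    ∃ r < m, r % 6 = 5 ∧ r.Coprime m := by
  rcases (by omega : m % 6 = 1 ∨ m % 6 = 5) with h1 | h5
  · refine ⟨m - 2, by omega, by omega, ?_⟩
    rw [Nat.coprime_self_sub_left (by omega), Nat.coprime_two_left, Nat.odd_iff]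
    omega
  · refine ⟨m - 6, by omega, by omega, ?_⟩
    rw [Nat.coprime_self_sub_left (by omega), Nat.coprime_comm]
    exact Nat.coprime_six_of_mod_six_eq_five h5

lemma exists_mod_three_eq_two_coprime_of_six_dvd {n : ℕ} (h6 : 6 ∣ n) (hn : 6 < n)
    (hex : n ∉ ({12, 18, 24, 30, 60} : Set ℕ)) :
    ∃ r, 6 * r < n ∧ r % 3 = 2 ∧ r.Coprime n := by
  simp only [Set.mem_insert_iff, Set.mem_singleton_iff, not_or] at hex
  obtain ⟨a, n₁, h2, hn₁⟩ := Nat.exists_eq_pow_mul_and_not_dvd (by omega : n ≠ 0) 2 (by norm_num)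
  obtain ⟨b, m, h3, rfl⟩ :=
    Nat.exists_eq_pow_mul_and_not_dvd (by rintro rfl; omega : n₁ ≠ 0) 3 (by norm_num)
  have hm2 : ¬ 2 ∣ m := fun h ↦ h2 (h.mul_left _)
  have ha : a ≠ 0 := by
    rintro rfl
    exact h2 (by simpa [hn₁] using (dvd_trans (by norm_num) h6 : 2 ∣ n))
  have hb : b ≠ 0 := by
    rintro rfl
    have : 3 ∣ 2 ^ a * m := by simpa [hn₁] using (dvd_trans (by norm_num) h6 : 3 ∣ n)
    exact h3 ((Nat.Coprime.pow_right a (by norm_num : Nat.Coprime 3 2)).dvd_of_dvd_mul_left this)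
  have hmn : 6 * m ≤ n := by
    rw [hn₁]
    calc 6 * m = 2 ^ 1 * (3 ^ 1 * m) := by ring
      _ ≤ 2 ^ a * (3 ^ b * m) := by gcongr <;> omega
  suffices ∃ r, 6 * r < n ∧ r % 6 = 5 ∧ r.Coprime m by
    obtain ⟨r, hr, h5, hrm⟩ := this
    refine ⟨r, hr, by omega, ?_⟩
    rw [hn₁]
    exact (coprime_six_of_mod_six_eq_five h5).mul_two_pow_mul_three_pow hrm a b
  rcases (by omega : m = 1 ∨ m = 5 ∨ 7 ≤ m) with rfl | rfl | hm
  · exact ⟨5, by omega, rfl, by norm_num⟩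
  · have : 6 * 5 ∣ n :=
      Nat.Coprime.mul_dvd_of_dvd_of_dvd (by norm_num) h6 ⟨2 ^ a * 3 ^ b, by rw [hn₁]; ring⟩
    exact ⟨11, by omega, rfl, by norm_num⟩
  · obtain ⟨r, hr, h5, hrm⟩ := exists_lt_mod_six_eq_five_coprime hm2 h3 hm
    exact ⟨r, by omega, h5, hrm⟩

end Nat

lemma exists_fract_div_lt_one_sixth_of_nat {n j : ℕ} (h6 : 6 * (j % n) < n) (h3 : j % 3 = 2)
    (hj : j.Coprime n) :
    ∃ j' : ℤ, j' % 3 = 2 ∧ Int.gcd j' n = 1 ∧ Int.fract ((j' : ℚ) / (n : ℚ)) < 1 / 6 := by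
  refine ⟨j, by omega, hj, ?_⟩
  have hn : (0 : ℚ) < n := by exact_mod_cast (by omega : 0 < n)
  rw [Int.cast_natCast, Int.fract_div_natCast_eq_div_natCast_mod, div_lt_iff₀ hn]
  have : (6 * ((j % n : ℕ) : ℚ)) < n := by exact_mod_cast h6
  linarith

theorem stmt_3 (m : ℤ) (hm : 6 < m)
    (h : m ∉ ({9, 12, 18, 24, 30, 60} : Set ℤ)) :
    ∃ j' : ℤ, j' % 3 = 2 ∧ Int.gcd j' m = 1 ∧ Int.fract ((j' : ℚ) / (m : ℚ)) < 1 / 6 := by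
  lift m to ℕ using by omega
  simp only [Set.mem_insert_iff, Set.mem_singleton_iff, not_or] at h
  by_cases h3 : 3 ∣ m
  · by_cases h2 : 2 ∣ m
    · obtain ⟨r, hr, hr3, hrm⟩ := Nat.exists_mod_three_eq_two_coprime_of_six_dvd
        (Nat.Coprime.mul_dvd_of_dvd_of_dvd (by norm_num) h2 h3) (by omega)
        (by simp only [Set.mem_insert_iff, Set.mem_singleton_iff]; omega)
      exact exists_fract_div_lt_one_sixth_of_nat (by rwa [Nat.mod_eq_of_lt (by omega)]) hr3 hrm
    · refine exists_fract_div_lt_one_sixth_of_nat (j := 2)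
        (by rw [Nat.mod_eq_of_lt (by omega)]; omega) rfl ?_
      exact Nat.coprime_two_left.mpr (Nat.odd_iff.mpr (by omega))
  · refine exists_fract_div_lt_one_sixth_of_nat (j := 1 + m * m) ?_ ?_
      ((Nat.coprime_add_mul_left_left 1 m m).mpr (Nat.coprime_one_left m))
    · rw [Nat.add_mul_mod_self_left, Nat.mod_eq_of_lt (by omega)]
      omega
    · rcases (by omega : m % 3 = 1 ∨ m % 3 = 2) with h | h <;>
        simp [Nat.add_mod, Nat.mul_mod, h]
end

section
/- Let m be a positive integer, j an integer with gcd(j, m) = 1, j/m ∉ {0, 2/3} (mod 1). Then for every integer t with gcd(t, 6m) = 1: if t ≡ 1 (mod 6) then ⟨t/6⟩ + ⟨−jt/m⟩ + ⟨t/3 + jt/m⟩ + ⟨t/2⟩ equals 1 when ⟨tj/m⟩ > 2/3 and equals 2 when ⟨tj/m⟩ < 2/3; if t ≡ 5 (mod 6) then the sum equals 3 when ⟨tj/m⟩ < 1/3 and equals 2 when ⟨tj/m⟩ > 1/3. -/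
/-!
Write `x = ⟨jt/m⟩`. Since `t` is prime to `m` and `j/m` is not an integer, neither is `jt/m`,
so `⟨-jt/m⟩ = 1 - x`. For `t` prime to `6` we have `⟨t/2⟩ = 1/2`, while `⟨t/6⟩` and `⟨t/3⟩`
are read off from `t mod 6`. Hence the sum is `t%6/6 + (1 - x) + ⟨t%3/3 + x⟩ + 1/2`, and the
only remaining question is whether `t%3/3 + x` wraps around `1`, which is decided by comparing
`x` with `1/3` or `2/3`.
-/

open Int

section

variable {R : Type*} [CommRing R] [LinearOrder R] [IsStrictOrderedRing R] [FloorRing R]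

theorem Int.fract_fract_add_fract (a b : R) : fract (fract a + fract b) = fract (a + b) :=
  fract_eq_fract.mpr ⟨-⌊a⌋ - ⌊b⌋, by push_cast [fract]; ring⟩

theorem Int.fract_eq_sub_one {a : R} (h₁ : 1 ≤ a) (h₂ : a < 2) : fract a = a - 1 :=
  fract_eq_iff.mpr ⟨by linarith, by linarith, 1, by push_cast; ring⟩

end

theorem fract_intCast_mul_div_ne_zero {j t m : ℤ} (htm : IsCoprime t m)
    (hj : fract ((j : ℚ) / m) ≠ 0) : fract ((j : ℚ) * t / m) ≠ 0 := by
  contrapose! hj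
  rcases eq_or_ne m 0 with rfl | hm
  · simp
  obtain ⟨z, hz⟩ := fract_eq_zero_iff.mp hj
  have hdvd : m ∣ j * t := ⟨z, by
    have : (j : ℚ) * t = m * z := by rw [hz]; field_simp
    exact_mod_cast this⟩
  obtain ⟨w, rfl⟩ := htm.symm.dvd_of_dvd_mul_right hdvd
  rw [cast_mul, mul_div_cancel_left₀ _ (by exact_mod_cast hm), fract_intCast]

def fractSum (t : ℤ) (y : ℚ) : ℚ :=
  fract ((t : ℚ) / 6) + fract (-y) + fract ((t : ℚ) / 3 + y) + fract ((t : ℚ) / 2)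

section

variable {t : ℤ} {y : ℚ}

theorem fractSum_eq_of_fract_ne_zero (hy : fract y ≠ 0) :
    fractSum t y = ((t % 6 : ℤ) : ℚ) / 6 + (1 - fract y) +
      fract (((t % 3 : ℤ) : ℚ) / 3 + fract y) + ((t % 2 : ℤ) : ℚ) / 2 := by
  have hmod (n : ℕ) : fract ((t : ℚ) / n) = ((t % n : ℤ) : ℚ) / n :=
    fract_div_intCast_eq_div_intCast_mod
  have h6 : fract ((t : ℚ) / 6) = ((t % 6 : ℤ) : ℚ) / 6 := mod_cast hmod 6
  have h3 : fract ((t : ℚ) / 3) = ((t % 3 : ℤ) : ℚ) / 3 := mod_cast hmod 3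
  have h2 : fract ((t : ℚ) / 2) = ((t % 2 : ℤ) : ℚ) / 2 := mod_cast hmod 2
  rw [fractSum, fract_neg hy, ← fract_fract_add_fract ((t : ℚ) / 3), h6, h3, h2]

theorem fractSum_of_emod_six_eq_one (ht : t % 6 = 1) (hy : fract y ≠ 0) :
    (2 / 3 < fract y → fractSum t y = 1) ∧ (fract y < 2 / 3 → fractSum t y = 2) := by
  have hsum : fractSum t y = 1 / 6 + (1 - fract y) + fract (1 / 3 + fract y) + 1 / 2 := by
    rw [fractSum_eq_of_fract_ne_zero hy, ht, show t % 3 = 1 by omega, show t % 2 = 1 by omega]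
    norm_num
  have hy0 := fract_nonneg y
  have hy1 := fract_lt_one y
  refine ⟨fun hgt ↦ ?_, fun hlt ↦ ?_⟩
  · rw [hsum, fract_eq_sub_one (a := 1 / 3 + fract y) (by linarith) (by linarith)]
    ring
  · rw [hsum, (fract_eq_self (a := 1 / 3 + fract y)).mpr ⟨by linarith, by linarith⟩]
    ring

theorem fractSum_of_emod_six_eq_five (ht : t % 6 = 5) (hy : fract y ≠ 0) :
    (fract y < 1 / 3 → fractSum t y = 3) ∧ (1 / 3 < fract y → fractSum t y = 2) := by
  have hsum : fractSum t y = 5 / 6 + (1 - fract y) + fract (2 / 3 + fract y) + 1 / 2 := by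
    rw [fractSum_eq_of_fract_ne_zero hy, ht, show t % 3 = 2 by omega, show t % 2 = 1 by omega]
    norm_num
  have hy0 := fract_nonneg y
  have hy1 := fract_lt_one y
  refine ⟨fun hlt ↦ ?_, fun hgt ↦ ?_⟩
  · rw [hsum, (fract_eq_self (a := 2 / 3 + fract y)).mpr ⟨by linarith, by linarith⟩]
    ring
  · rw [hsum, fract_eq_sub_one (a := 2 / 3 + fract y) (by linarith) (by linarith)]
    ring

end

theorem stmt_4_general (m : ℤ) (j : ℤ)
    (h0 : Int.fract ((j : ℚ) / (m : ℚ)) ≠ 0) :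
    ∀ t : ℤ, Int.gcd t (6 * m) = 1 →
      ((t % 6 = 1 →
        ((2 / 3 < Int.fract ((t : ℚ) * j / m) →
          Int.fract ((t : ℚ) / 6) + Int.fract (-((j : ℚ) * t / m)) +
            Int.fract ((t : ℚ) / 3 + (j : ℚ) * t / m) + Int.fract ((t : ℚ) / 2) = 1) ∧
         (Int.fract ((t : ℚ) * j / m) < 2 / 3 →
          Int.fract ((t : ℚ) / 6) + Int.fract (-((j : ℚ) * t / m)) +
            Int.fract ((t : ℚ) / 3 + (j : ℚ) * t / m) + Int.fract ((t : ℚ) / 2) = 2))) ∧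
       (t % 6 = 5 →
        ((Int.fract ((t : ℚ) * j / m) < 1 / 3 →
          Int.fract ((t : ℚ) / 6) + Int.fract (-((j : ℚ) * t / m)) +
            Int.fract ((t : ℚ) / 3 + (j : ℚ) * t / m) + Int.fract ((t : ℚ) / 2) = 3) ∧
         (1 / 3 < Int.fract ((t : ℚ) * j / m) →
          Int.fract ((t : ℚ) / 6) + Int.fract (-((j : ℚ) * t / m)) +
            Int.fract ((t : ℚ) / 3 + (j : ℚ) * t / m) + Int.fract ((t : ℚ) / 2) = 2)))) := by
  intro t ht
  have htm : IsCoprime t m := (isCoprime_iff_gcd_eq_one.mpr ht).of_mul_right_right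
  have hy := fract_intCast_mul_div_ne_zero htm h0
  rw [mul_comm (t : ℚ) j]
  exact ⟨fun h1 ↦ fractSum_of_emod_six_eq_one h1 hy, fun h5 ↦ fractSum_of_emod_six_eq_five h5 hy⟩

theorem stmt_4 (m : ℤ) (hm : 0 < m) (j : ℤ) (hjm : Int.gcd j m = 1)
    (h0 : Int.fract ((j : ℚ) / (m : ℚ)) ≠ 0)
    (h23 : Int.fract ((j : ℚ) / (m : ℚ)) ≠ 2 / 3) :
    ∀ t : ℤ, Int.gcd t (6 * m) = 1 →
      ((t % 6 = 1 →
        ((2 / 3 < Int.fract ((t : ℚ) * j / m) →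
          Int.fract ((t : ℚ) / 6) + Int.fract (-((j : ℚ) * t / m)) +
            Int.fract ((t : ℚ) / 3 + (j : ℚ) * t / m) + Int.fract ((t : ℚ) / 2) = 1) ∧
         (Int.fract ((t : ℚ) * j / m) < 2 / 3 →
          Int.fract ((t : ℚ) / 6) + Int.fract (-((j : ℚ) * t / m)) +
            Int.fract ((t : ℚ) / 3 + (j : ℚ) * t / m) + Int.fract ((t : ℚ) / 2) = 2))) ∧
       (t % 6 = 5 →
        ((Int.fract ((t : ℚ) * j / m) < 1 / 3 →
          Int.fract ((t : ℚ) / 6) + Int.fract (-((j : ℚ) * t / m)) +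
            Int.fract ((t : ℚ) / 3 + (j : ℚ) * t / m) + Int.fract ((t : ℚ) / 2) = 3) ∧
         (1 / 3 < Int.fract ((t : ℚ) * j / m) →
          Int.fract ((t : ℚ) / 6) + Int.fract (-((j : ℚ) * t / m)) +
            Int.fract ((t : ℚ) / 3 + (j : ℚ) * t / m) + Int.fract ((t : ℚ) / 2) = 2)))) :=
  stmt_4_general m j h0
end

section
/- Let f = X^a + Y^b + s^n X^{λa} Y^{(1−λ)b} in k(s)[X^{±1}, Y^{±1}] with k an algebraically closed field of characteristic 0, s transcendental over k, n a nonzero integer, a, b positive integers, and λ ∈ ℚ with 0 < λ < 1 such that λa and (1−λ)b are integers. Then the system f = 0, X·∂f/∂X = 0 has no solution (x, y) with x, y ∈ (algebraic closure of k(s))* when a ≠ 0. -/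
/-!
Write `t = s ^ n`. The two equations give `p y^b = (a - p) x^a` and `p t x^p y^q = -a x^a`;
raising them to the powers `q` and `b` and using `p b + q a = a b` to cancel the monomial
`x^(ab) y^(bq)` leaves `p^b (a - p)^q t^b = (-a)^b p^q`. So `s ^ (n b)` is a constant of `k`,
which is impossible for the transcendental `s` since `n b ≠ 0`.
-/

theorem Transcendental.zpow_ne_algebraMap {R L : Type*} [CommRing R] [Nontrivial R] [Field L]
    [Algebra R L] {s : L} (hs : Transcendental R s) {m : ℤ} (hm : m ≠ 0) (c : R) :
    s ^ m ≠ algebraMap R L c := by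
  intro h
  have halg : IsAlgebraic R (s ^ m) := h ▸ isAlgebraic_algebraMap c
  obtain ⟨m, rfl | rfl⟩ := m.eq_nat_or_neg
  · exact hs.pow (n := m) (by omega) (by simpa using halg)
  · exact hs.pow (n := m) (by omega) (IsAlgebraic.inv_iff.1 (by simpa using halg))

theorem trinomial_critical_relation {K : Type*} [CommRing K] [IsDomain K] {a b p q : ℕ}
    (hlam : p * b + q * a = a * b) {x y t : K} (hx : x ≠ 0) (hy : y ≠ 0)
    (hf : x ^ a + y ^ b + t * x ^ p * y ^ q = 0)
    (hXf : (a : K) * x ^ a + p * t * x ^ p * y ^ q = 0) :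
    (p : K) ^ b * ((a : K) - p) ^ q * t ^ b = (-(a : K)) ^ b * (p : K) ^ q := by
  have hy_b : (p : K) * y ^ b = ((a : K) - p) * x ^ a := by linear_combination (p : K) * hf - hXf
  have hmono : (p : K) * t * x ^ p * y ^ q = -(a : K) * x ^ a := by linear_combination hXf
  have hx_ab : x ^ (a * b) = x ^ (p * b) * x ^ (q * a) := by rw [← pow_add, hlam]
  refine mul_right_cancel₀ (mul_ne_zero (pow_ne_zero (a * b) hx) (pow_ne_zero (b * q) hy)) ?_
  calc (p : K) ^ b * ((a : K) - p) ^ q * t ^ b * (x ^ (a * b) * y ^ (b * q))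
      = ((p : K) * t * x ^ p * y ^ q) ^ b * (((a : K) - p) * x ^ a) ^ q := by
        rw [hx_ab, mul_pow ((a : K) - p) (x ^ a) q]; ring
    _ = (-(a : K) * x ^ a) ^ b * ((p : K) * y ^ b) ^ q := by rw [hmono, hy_b]
    _ = (-(a : K)) ^ b * (p : K) ^ q * (x ^ (a * b) * y ^ (b * q)) := by ring

theorem stmt_8_general (k : Type*) [Field k] [CharZero k]
    (a b p q : ℕ) (hb : 0 < b) (hp : 0 < p) (hpa : p < a)
    (hlam : p * b + q * a = a * b) (n : ℤ) (hn : n ≠ 0) :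
    ¬ ∃ x y : AlgebraicClosure (RatFunc k), x ≠ 0 ∧ y ≠ 0 ∧
        x ^ a + y ^ b +
          (algebraMap (RatFunc k) (AlgebraicClosure (RatFunc k)) RatFunc.X) ^ n *
            x ^ p * y ^ q = 0 ∧
        (a : AlgebraicClosure (RatFunc k)) * x ^ a +
          (p : AlgebraicClosure (RatFunc k)) *
            (algebraMap (RatFunc k) (AlgebraicClosure (RatFunc k)) RatFunc.X) ^ n *
            x ^ p * y ^ q = 0 := by
  rintro ⟨x, y, hx, hy, hf, hXf⟩
  set s := algebraMap (RatFunc k) (AlgebraicClosure (RatFunc k)) RatFunc.X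
  have hs : Transcendental k s :=
    (transcendental_algebraMap_iff (algebraMap (RatFunc k) _).injective).2
      RatFunc.transcendental_X
  have : CharZero (AlgebraicClosure (RatFunc k)) :=
    charZero_of_injective_algebraMap (algebraMap k _).injective
  have hrel := trinomial_critical_relation hlam hx hy hf hXf
  rw [← zpow_natCast (s ^ n) b, ← zpow_mul] at hrel
  have hcoeff : (p : AlgebraicClosure (RatFunc k)) ^ b *
      ((a : AlgebraicClosure (RatFunc k)) - p) ^ q ≠ 0 := by
    simp [sub_eq_zero, hp.ne', hpa.ne']
  refine hs.zpow_ne_algebraMap (m := n * b) (by positivity)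
    ((-(a : k)) ^ b * p ^ q / (p ^ b * (a - p) ^ q)) ?_
  simp only [map_div₀, map_mul, map_pow, map_neg, map_sub, map_natCast]
  rw [eq_div_iff hcoeff]
  linear_combination hrel

theorem stmt_8 (k : Type*) [Field k] [IsAlgClosed k] [CharZero k]
    (a b p q : ℕ) (ha : 0 < a) (hb : 0 < b) (hp : 0 < p) (hpa : p < a)
    (hlam : p * b + q * a = a * b) (n : ℤ) (hn : n ≠ 0) :
    ¬ ∃ x y : AlgebraicClosure (RatFunc k), x ≠ 0 ∧ y ≠ 0 ∧
        x ^ a + y ^ b +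
          (algebraMap (RatFunc k) (AlgebraicClosure (RatFunc k)) RatFunc.X) ^ n *
            x ^ p * y ^ q = 0 ∧
        (a : AlgebraicClosure (RatFunc k)) * x ^ a +
          (p : AlgebraicClosure (RatFunc k)) *
            (algebraMap (RatFunc k) (AlgebraicClosure (RatFunc k)) RatFunc.X) ^ n *
            x ^ p * y ^ q = 0 :=
  stmt_8_general k a b p q hb hp hpa hlam n hn
end

section
/- Let m, j be coprime integers with m > 0. Then for all integers t coprime to 4m: ⟨tj/m − 3t/4⟩ + ⟨−tj/m⟩ + ⟨t/4⟩ + ⟨t/2⟩ equals 2 if t ≡ 1 (mod 4) and ⟨tj/m⟩ < 3/4, equals 1 if t ≡ 1 (mod 4) and ⟨tj/m⟩ > 3/4, equals 3 if t ≡ 3 (mod 4) and ⟨tj/m⟩ < 1/4, and equals 2 if t ≡ 3 (mod 4) and ⟨tj/m⟩ > 1/4. -/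
/-! Put `x = tj/m` and `t = 4q + r` with `r ∈ {1, 3}`. Then `x - 3t/4 ≡ x + r/4 (mod 1)`,
`⟨t/4⟩ = r/4`, `⟨t/2⟩ = 1/2`, and `⟨-x⟩ = 1 - ⟨x⟩` because `m ∤ tj`. The sum is therefore
`⟨x + r/4⟩ + 1 - ⟨x⟩ + r/4 + 1/2`, and `⟨x + r/4⟩` is `⟨x⟩ + r/4` or `⟨x⟩ + r/4 - 1`
according as `⟨x⟩ < 1 - r/4` or not. -/

namespace Int

variable {k : Type*} [Field k] [LinearOrder k] [IsStrictOrderedRing k] [FloorRing k]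

theorem fract_intCast_div_ne_zero {a m : ℤ} (hm : m ≠ 0) (h : ¬ m ∣ a) :
    fract ((a : k) / m) ≠ 0 := by
  intro hzero
  obtain ⟨z, hz⟩ := fract_eq_zero_iff.1 hzero
  have hm' : (m : k) ≠ 0 := by exact_mod_cast hm
  rw [eq_div_iff hm'] at hz
  exact h ⟨z, by exact_mod_cast (hz.symm.trans (mul_comm _ _) :)⟩

theorem fract_add_of_fract_add_lt_one {x c : k} (hc : 0 ≤ c) (h : fract x + c < 1) :
    fract (x + c) = fract x + c := by
  rw [show x + c = fract x + c + ⌊x⌋ by rw [← self_sub_floor]; ring, fract_add_intCast,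
    fract_eq_self]
  exact ⟨add_nonneg (fract_nonneg x) hc, h⟩

theorem fract_add_of_one_le_fract_add {x c : k} (hc : c < 1) (h : 1 ≤ fract x + c) :
    fract (x + c) = fract x + c - 1 := by
  rw [show x + c = fract x + c - 1 + ((⌊x⌋ + 1 : ℤ) : k) by push_cast; rw [← self_sub_floor]; ring,
    fract_add_intCast, fract_eq_self]
  constructor <;> linarith [fract_lt_one x]

theorem fract_sub_three_mul_div_four (x : k) (t : ℤ) :
    fract (x - 3 * t / 4) = fract (x + (t % 4 : ℤ) / 4) := by
  have ht : ((t % 4 + 4 * (t / 4) : ℤ) : k) = t := by rw [emod_add_mul_ediv]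
  rw [show x - 3 * t / 4 = x + (t % 4 : ℤ) / 4 - ((3 * (t / 4) + t % 4 : ℤ) : k) by
    rw [← ht]; push_cast; ring, fract_sub_intCast]

theorem fract_intCast_div_four (t : ℤ) : fract ((t : k) / 4) = (t % 4 : ℤ) / 4 := by
  simpa using fract_div_intCast_eq_div_intCast_mod (k := k) (m := t) (n := 4)

theorem fract_intCast_div_two_of_odd {t : ℤ} (ht : t % 2 = 1) : fract ((t : k) / 2) = 1 / 2 := by
  simpa [ht] using fract_div_intCast_eq_div_intCast_mod (k := k) (m := t) (n := 2)

theorem fract_sub_three_mul_div_four_add_fract_neg {x : k} {t : ℤ} (hx : fract x ≠ 0)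
    (ht : t % 2 = 1) :
    fract (x - 3 * t / 4) + fract (-x) + fract ((t : k) / 4) + fract ((t : k) / 2) =
      fract (x + (t % 4 : ℤ) / 4) + (1 - fract x) + (t % 4 : ℤ) / 4 + 1 / 2 := by
  rw [fract_sub_three_mul_div_four, fract_neg hx, fract_intCast_div_four,
    fract_intCast_div_two_of_odd ht]

end Int

theorem stmt_13_general (m j : ℤ) (hm : 0 < m) (hndvd : ¬ m ∣ j) :
    ∀ t : ℤ, Int.gcd t (4 * m) = 1 →
      ((t % 4 = 1 → Int.fract ((t : ℚ) * j / m) < 3 / 4 →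
        Int.fract ((t : ℚ) * j / m - 3 * t / 4) + Int.fract (-((t : ℚ) * j / m)) +
          Int.fract ((t : ℚ) / 4) + Int.fract ((t : ℚ) / 2) = 2) ∧
       (t % 4 = 1 → 3 / 4 < Int.fract ((t : ℚ) * j / m) →
        Int.fract ((t : ℚ) * j / m - 3 * t / 4) + Int.fract (-((t : ℚ) * j / m)) +
          Int.fract ((t : ℚ) / 4) + Int.fract ((t : ℚ) / 2) = 1) ∧
       (t % 4 = 3 → Int.fract ((t : ℚ) * j / m) < 1 / 4 →
        Int.fract ((t : ℚ) * j / m - 3 * t / 4) + Int.fract (-((t : ℚ) * j / m)) +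
          Int.fract ((t : ℚ) / 4) + Int.fract ((t : ℚ) / 2) = 3) ∧
       (t % 4 = 3 → 1 / 4 < Int.fract ((t : ℚ) * j / m) →
        Int.fract ((t : ℚ) * j / m - 3 * t / 4) + Int.fract (-((t : ℚ) * j / m)) +
          Int.fract ((t : ℚ) / 4) + Int.fract ((t : ℚ) / 2) = 2)) := by
  intro t ht
  have hcop : IsCoprime m t :=
    ((Int.isCoprime_iff_gcd_eq_one.mpr ht).of_mul_right_right).symm
  have hx : Int.fract ((t : ℚ) * j / m) ≠ 0 := by
    have := Int.fract_intCast_div_ne_zero (k := ℚ) hm.ne'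
      (fun h : m ∣ t * j => hndvd (hcop.dvd_of_dvd_mul_left h))
    rwa [Int.cast_mul] at this
  refine ⟨fun h4 hlt => ?_, fun h4 hlt => ?_, fun h4 hlt => ?_, fun h4 hlt => ?_⟩ <;>
    rw [Int.fract_sub_three_mul_div_four_add_fract_neg hx (by omega), h4] <;> push_cast
  · rw [Int.fract_add_of_fract_add_lt_one (by norm_num) (by linarith)]; ring
  · rw [Int.fract_add_of_one_le_fract_add (by norm_num) (by linarith)]; ring
  · rw [Int.fract_add_of_fract_add_lt_one (by norm_num) (by linarith)]; ring
  · rw [Int.fract_add_of_one_le_fract_add (by norm_num) (by linarith)]; ring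

theorem stmt_13 (m j : ℤ) (hm : 0 < m) (hjm : Int.gcd j m = 1) (hndvd : ¬ m ∣ j) :
    ∀ t : ℤ, Int.gcd t (4 * m) = 1 →
      ((t % 4 = 1 → Int.fract ((t : ℚ) * j / m) < 3 / 4 →
        Int.fract ((t : ℚ) * j / m - 3 * t / 4) + Int.fract (-((t : ℚ) * j / m)) +
          Int.fract ((t : ℚ) / 4) + Int.fract ((t : ℚ) / 2) = 2) ∧
       (t % 4 = 1 → 3 / 4 < Int.fract ((t : ℚ) * j / m) →
        Int.fract ((t : ℚ) * j / m - 3 * t / 4) + Int.fract (-((t : ℚ) * j / m)) +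
          Int.fract ((t : ℚ) / 4) + Int.fract ((t : ℚ) / 2) = 1) ∧
       (t % 4 = 3 → Int.fract ((t : ℚ) * j / m) < 1 / 4 →
        Int.fract ((t : ℚ) * j / m - 3 * t / 4) + Int.fract (-((t : ℚ) * j / m)) +
          Int.fract ((t : ℚ) / 4) + Int.fract ((t : ℚ) / 2) = 3) ∧
       (t % 4 = 3 → 1 / 4 < Int.fract ((t : ℚ) * j / m) →
        Int.fract ((t : ℚ) * j / m - 3 * t / 4) + Int.fract (-((t : ℚ) * j / m)) +
          Int.fract ((t : ℚ) / 4) + Int.fract ((t : ℚ) / 2) = 2)) :=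
  stmt_13_general m j hm hndvd
end
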